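/- For every cr-free HOSC term Γ ⊢ M : τ, Γ-assignment ρ and continuation name c : τ: t ∈ Tr_HOS(C_{M,bra}^{ρ,c}) if and only if t ∈ Tr_HOSC(C_M^{ρ,c}) and t is O-bracketed. -/

import Mathlib

set_option maxHeartbeats 1000000
set_option autoImplicit true

namespace OGS

/-! ## Types -/

inductive Ty : Type
  | unit | int | bool
  | ref : Ty → Ty
  | prod : Ty → Ty → Ty
  | arrow : Ty → Ty → Ty
  | cont : Ty → Ty
  deriving DecidableEq

/-- Ground types ι ::= Unit | Int | Bool | ref ι -/
inductive Ty.Ground : Ty → Prop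
  | unit : Ty.Ground .unit
  | int : Ty.Ground .int
  | bool : Ty.Ground .bool
  | ref {ι : Ty} : Ty.Ground ι → Ty.Ground (.ref ι)

/-- GOSC types: reference types restricted to ground contents. -/
def Ty.isGOSC : Ty → Prop
  | .unit => True
  | .int => True
  | .bool => True
  | .ref ι => Ty.Ground ι
  | .prod a b => a.isGOSC ∧ b.isGOSC
  | .arrow a b => a.isGOSC ∧ b.isGOSC
  | .cont a => a.isGOSC

/-- HOS types: no cont constructor. -/
def Ty.isHOS : Ty → Prop
  | .unit => True
  | .int => True
  | .bool => True
  | .ref a => a.isHOS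
  | .prod a b => a.isHOS ∧ b.isHOS
  | .arrow a b => a.isHOS ∧ b.isHOS
  | .cont _ => False

/-- cont- and ref-free types -/
def Ty.crFree : Ty → Prop
  | .unit => True
  | .int => True
  | .bool => True
  | .ref _ => False
  | .prod a b => a.crFree ∧ b.crFree
  | .arrow a b => a.crFree ∧ b.crFree
  | .cont _ => False

inductive Frag | HOSC | GOSC | HOS | GOS
  deriving DecidableEq

def Frag.tyOK : Frag → Ty → Prop
  | .HOSC, _ => True
  | .GOSC, τ => τ.isGOSC
  | .HOS, τ => τ.isHOS
  | .GOS, τ => τ.isGOSC ∧ τ.isHOS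

/-- fragments featuring control (callcc/throw/cont) -/
def Frag.hasCont : Frag → Prop
  | .HOSC => True
  | .GOSC => True
  | .HOS => False
  | .GOS => False

/-! ## Names -/

structure FName where
  id : ℕ
  dom : Ty
  cod : Ty
  deriving DecidableEq

structure CName where
  id : ℕ
  ty : Ty
  deriving DecidableEq

inductive Name
  | fn : FName → Name
  | cn : CName → Name
  deriving DecidableEq

/-- the designated error function name errn : Unit → Unit -/
def errn : FName := ⟨0, .unit, .unit⟩

/-- the designated terminal continuation names tern_σ -/
def tern (σ : Ty) : CName := ⟨0, σ⟩

/-- ◦ = { tern_σ | σ } -/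
def circNames : Set Name := {n | ∃ σ : Ty, n = Name.cn (tern σ)}

/-! ## Terms -/

inductive ArithOp | add | sub | mul
inductive CmpOp | eq | lt

inductive Tm : Type
  | unit | tt | ff
  | int : ℤ → Tm
  | bvar : ℕ → Tm
  | errv : Tm                      -- the designated error variable err : Unit → Unit
  | loc : ℕ → Tm
  | fname : FName → Tm             -- extended syntax: function names as constants
  | hole : Tm                      -- the hole • of contexts / evaluation contexts
  | pair : Tm → Tm → Tm
  | fst : Tm → Tm
  | snd : Tm → Tm
  | lam : Ty → Tm → Tm             -- de Bruijn
  | fix : Ty → Ty → Tm → Tm        -- fix y (x:σ).M : σ→τ, bvar 0 = x, bvar 1 = y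
  | app : Tm → Tm → Tm
  | newref : Ty → Tm → Tm
  | deref : Tm → Tm
  | assign : Tm → Tm → Tm
  | ifte : Tm → Tm → Tm → Tm
  | arith : ArithOp → Tm → Tm → Tm
  | cmp : CmpOp → Tm → Tm → Tm
  | refeq : Tm → Tm → Tm
  | callcc : Ty → Tm → Tm          -- callcc_τ(x.M), binds x
  | throw : Ty → Tm → Tm → Tm      -- throw_τ M to N
  | contV : Ty → Ty → Tm → Tm      -- cont_τ(K), K : τ ⇒ σ
  | contE : Ty → Tm → CName → Tm   -- extended: cont_τ(K, c)

inductive IsVal : Tm → Prop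
  | unit : IsVal .unit
  | tt : IsVal .tt
  | ff : IsVal .ff
  | int (n : ℤ) : IsVal (.int n)
  | bvar (i : ℕ) : IsVal (.bvar i)
  | errv : IsVal .errv
  | loc (ℓ : ℕ) : IsVal (.loc ℓ)
  | fname (f : FName) : IsVal (.fname f)
  | pair {u v : Tm} : IsVal u → IsVal v → IsVal (.pair u v)
  | lam (τ : Ty) (M : Tm) : IsVal (.lam τ M)
  | fix (σ τ : Ty) (M : Tm) : IsVal (.fix σ τ M)
  | contV (τ σ : Ty) (K : Tm) : IsVal (.contV τ σ K)
  | contE (τ : Ty) (K : Tm) (c : CName) : IsVal (.contE τ K c)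

/-- substitution of a (closed) term `V` for de Bruijn index `k` -/
def Tm.subst : Tm → ℕ → Tm → Tm
  | .bvar i, k, V => if i = k then V else if k < i then .bvar (i - 1) else .bvar i
  | .pair a b, k, V => .pair (a.subst k V) (b.subst k V)
  | .fst a, k, V => .fst (a.subst k V)
  | .snd a, k, V => .snd (a.subst k V)
  | .lam τ a, k, V => .lam τ (a.subst (k+1) V)
  | .fix σ τ a, k, V => .fix σ τ (a.subst (k+2) V)
  | .app a b, k, V => .app (a.subst k V) (b.subst k V)
  | .newref τ a, k, V => .newref τ (a.subst k V)
  | .deref a, k, V => .deref (a.subst k V)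
  | .assign a b, k, V => .assign (a.subst k V) (b.subst k V)
  | .ifte a b c, k, V => .ifte (a.subst k V) (b.subst k V) (c.subst k V)
  | .arith op a b, k, V => .arith op (a.subst k V) (b.subst k V)
  | .cmp op a b, k, V => .cmp op (a.subst k V) (b.subst k V)
  | .refeq a b, k, V => .refeq (a.subst k V) (b.subst k V)
  | .callcc τ a, k, V => .callcc τ (a.subst (k+1) V)
  | .throw τ a b, k, V => .throw τ (a.subst k V) (b.subst k V)
  | .contV τ σ K, k, V => .contV τ σ (K.subst k V)
  | .contE τ K c, k, V => .contE τ (K.subst k V) c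
  | t, _, _ => t

/-- simultaneous substitution of a list of closed values for the free variables 0,1,2,… -/
def Tm.msubst (M : Tm) (γ : List Tm) : Tm := γ.foldl (fun N V => N.subst 0 V) M

/-- filling the hole of a context/evaluation context (capturing; does not descend
into the evaluation-context argument of continuation constants, whose hole is their own) -/
def Tm.fill : Tm → Tm → Tm
  | .hole, M => M
  | .pair a b, M => .pair (a.fill M) (b.fill M)
  | .fst a, M => .fst (a.fill M)
  | .snd a, M => .snd (a.fill M)
  | .lam τ a, M => .lam τ (a.fill M)
  | .fix σ τ a, M => .fix σ τ (a.fill M)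
  | .app a b, M => .app (a.fill M) (b.fill M)
  | .newref τ a, M => .newref τ (a.fill M)
  | .deref a, M => .deref (a.fill M)
  | .assign a b, M => .assign (a.fill M) (b.fill M)
  | .ifte a b c, M => .ifte (a.fill M) (b.fill M) (c.fill M)
  | .arith op a b, M => .arith op (a.fill M) (b.fill M)
  | .cmp op a b, M => .cmp op (a.fill M) (b.fill M)
  | .refeq a b, M => .refeq (a.fill M) (b.fill M)
  | .callcc τ a, M => .callcc τ (a.fill M)
  | .throw τ a b, M => .throw τ (a.fill M) (b.fill M)
  | t, _ => t

/-- list of all subterm occurrences -/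
def Tm.subterms : Tm → List Tm
  | .pair a b => .pair a b :: (a.subterms ++ b.subterms)
  | .fst a => .fst a :: a.subterms
  | .snd a => .snd a :: a.subterms
  | .lam τ a => .lam τ a :: a.subterms
  | .fix σ τ a => .fix σ τ a :: a.subterms
  | .app a b => .app a b :: (a.subterms ++ b.subterms)
  | .newref τ a => .newref τ a :: a.subterms
  | .deref a => .deref a :: a.subterms
  | .assign a b => .assign a b :: (a.subterms ++ b.subterms)
  | .ifte a b c => .ifte a b c :: (a.subterms ++ b.subterms ++ c.subterms)
  | .arith op a b => .arith op a b :: (a.subterms ++ b.subterms)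
  | .cmp op a b => .cmp op a b :: (a.subterms ++ b.subterms)
  | .refeq a b => .refeq a b :: (a.subterms ++ b.subterms)
  | .callcc τ a => .callcc τ a :: a.subterms
  | .throw τ a b => .throw τ a b :: (a.subterms ++ b.subterms)
  | .contV τ σ K => .contV τ σ K :: K.subterms
  | .contE τ K c => .contE τ K c :: K.subterms
  | t => [t]

/-- number of occurrences of the (ambient) hole, not counting holes belonging
to continuation constants -/
def Tm.holeCount : Tm → ℕ
  | .hole => 1
  | .pair a b => a.holeCount + b.holeCount
  | .fst a => a.holeCount
  | .snd a => a.holeCount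
  | .lam _ a => a.holeCount
  | .fix _ _ a => a.holeCount
  | .app a b => a.holeCount + b.holeCount
  | .newref _ a => a.holeCount
  | .deref a => a.holeCount
  | .assign a b => a.holeCount + b.holeCount
  | .ifte a b c => a.holeCount + b.holeCount + c.holeCount
  | .arith _ a b => a.holeCount + b.holeCount
  | .cmp _ a b => a.holeCount + b.holeCount
  | .refeq a b => a.holeCount + b.holeCount
  | .callcc _ a => a.holeCount
  | .throw _ a b => a.holeCount + b.holeCount
  | _ => 0

/-- ν(M): the set of (function and continuation) names occurring in a term -/
def Tm.names (M : Tm) : Set Name :=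
  {n | (∃ f, n = Name.fn f ∧ Tm.fname f ∈ M.subterms) ∨
       (∃ c, n = Name.cn c ∧ ∃ τ K, Tm.contE τ K c ∈ M.subterms)}

/-- surface (non-extended) syntax: no function-name constants, no cont_τ(K,c) -/
def Tm.extFree (M : Tm) : Prop :=
  (∀ f, Tm.fname f ∉ M.subterms) ∧ (∀ τ K c, Tm.contE τ K c ∉ M.subterms)

/-- no occurrence of a continuation constant cont_τ(K) -/
def Tm.contVFree (M : Tm) : Prop := ∀ τ σ K, Tm.contV τ σ K ∉ M.subterms

def Tm.locFree (M : Tm) : Prop := ∀ ℓ, Tm.loc ℓ ∉ M.subterms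

/-- syntactic conditions of cr-freeness: no continuation constants and no locations -/
def Tm.crFreeSyn (M : Tm) : Prop :=
  (∀ τ σ K, Tm.contV τ σ K ∉ M.subterms) ∧
  (∀ τ K c, Tm.contE τ K c ∉ M.subterms) ∧
  (∀ ℓ, Tm.loc ℓ ∉ M.subterms)

/-- head-constructor check for membership in a fragment's (surface) syntax -/
def Tm.headOK (x : Frag) : Tm → Prop
  | .lam τ _ => x.tyOK τ
  | .fix σ τ _ => x.tyOK (Ty.arrow σ τ)
  | .newref τ _ => x.tyOK (Ty.ref τ)
  | .callcc τ _ => x.hasCont ∧ x.tyOK (Ty.cont τ)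
  | .throw τ _ _ => x.hasCont ∧ x.tyOK τ
  | .contV τ σ _ => x.hasCont ∧ x.tyOK (Ty.cont τ) ∧ x.tyOK σ
  | .contE _ _ _ => False
  | .fname _ => False
  | _ => True

/-- `M` is built from the (surface) syntax of fragment `x` -/
def Tm.inFrag (x : Frag) (M : Tm) : Prop := ∀ N ∈ M.subterms, N.headOK x

/-- head-constructor check for the name-extended syntax of a fragment -/
def Tm.headOKX (x : Frag) : Tm → Prop
  | .lam τ _ => x.tyOK τ
  | .fix σ τ _ => x.tyOK (Ty.arrow σ τ)
  | .newref τ _ => x.tyOK (Ty.ref τ)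
  | .callcc τ _ => x.hasCont ∧ x.tyOK (Ty.cont τ)
  | .throw τ _ _ => x.hasCont ∧ x.tyOK τ
  | .contV τ σ _ => x.hasCont ∧ x.tyOK (Ty.cont τ) ∧ x.tyOK σ
  | .contE τ _ c => x.hasCont ∧ x.tyOK (Ty.cont τ) ∧ x.tyOK c.ty
  | .fname f => x.tyOK (Ty.arrow f.dom f.cod)
  | _ => True

/-- `M` is built from the name-extended syntax of fragment `x` -/
def Tm.inFragX (x : Frag) (M : Tm) : Prop := ∀ N ∈ M.subterms, N.headOKX x

/-! ## Evaluation contexts -/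

inductive IsECtx : Tm → Prop
  | hole : IsECtx .hole
  | pairV {v K : Tm} : IsVal v → IsECtx K → IsECtx (.pair v K)
  | pairK {K M : Tm} : IsECtx K → IsECtx (.pair K M)
  | fst {K : Tm} : IsECtx K → IsECtx (.fst K)
  | snd {K : Tm} : IsECtx K → IsECtx (.snd K)
  | appV {v K : Tm} : IsVal v → IsECtx K → IsECtx (.app v K)
  | appK {K M : Tm} : IsECtx K → IsECtx (.app K M)
  | newref {τ : Ty} {K : Tm} : IsECtx K → IsECtx (.newref τ K)
  | deref {K : Tm} : IsECtx K → IsECtx (.deref K)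
  | assignV {v K : Tm} : IsVal v → IsECtx K → IsECtx (.assign v K)
  | assignK {K M : Tm} : IsECtx K → IsECtx (.assign K M)
  | ifte {K M N : Tm} : IsECtx K → IsECtx (.ifte K M N)
  | arithK {op} {K M : Tm} : IsECtx K → IsECtx (.arith op K M)
  | arithV {op} {v K : Tm} : IsVal v → IsECtx K → IsECtx (.arith op v K)
  | cmpK {op} {K M : Tm} : IsECtx K → IsECtx (.cmp op K M)
  | cmpV {op} {v K : Tm} : IsVal v → IsECtx K → IsECtx (.cmp op v K)
  | refeqK {K M : Tm} : IsECtx K → IsECtx (.refeq K M)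
  | refeqV {v K : Tm} : IsVal v → IsECtx K → IsECtx (.refeq v K)
  | throwV {τ : Ty} {v K : Tm} : IsVal v → IsECtx K → IsECtx (.throw τ v K)
  | throwK {τ : Ty} {K M : Tm} : IsECtx K → IsECtx (.throw τ K M)

/-! ## Typing -/

abbrev LocTy := ℕ → Option Ty
abbrev TyCtx := List Ty

def emptyLocTy : LocTy := fun _ => none

/-- Typing judgment `Typed Σ Δ hσ M τ`: locations typed by `Σ`, de Bruijn context `Δ`,
`hσ` is the type of the hole (if a hole is permitted). -/
inductive Typed : LocTy → TyCtx → Option Ty → Tm → Ty → Prop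
  | unit : Typed St Δ hσ .unit .unit
  | tt : Typed St Δ hσ .tt .bool
  | ff : Typed St Δ hσ .ff .bool
  | int (n : ℤ) : Typed St Δ hσ (.int n) .int
  | bvar {i τ} : Δ[i]? = some τ → Typed St Δ hσ (.bvar i) τ
  | errv : Typed St Δ hσ .errv (.arrow .unit .unit)
  | loc {ℓ τ} : St ℓ = some τ → Typed St Δ hσ (.loc ℓ) (.ref τ)
  | fname (f : FName) : Typed St Δ hσ (.fname f) (.arrow f.dom f.cod)
  | hole : Typed St Δ (some τ) .hole τ
  | pair : Typed St Δ hσ a σ → Typed St Δ hσ b τ → Typed St Δ hσ (.pair a b) (.prod σ τ)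
  | fst : Typed St Δ hσ a (.prod σ τ) → Typed St Δ hσ (.fst a) σ
  | snd : Typed St Δ hσ a (.prod σ τ) → Typed St Δ hσ (.snd a) τ
  | lam : Typed St (σ :: Δ) hσ M τ → Typed St Δ hσ (.lam σ M) (.arrow σ τ)
  | fix : Typed St (σ :: Ty.arrow σ τ :: Δ) hσ M τ → Typed St Δ hσ (.fix σ τ M) (.arrow σ τ)
  | app : Typed St Δ hσ a (.arrow σ τ) → Typed St Δ hσ b σ → Typed St Δ hσ (.app a b) τ
  | newref : Typed St Δ hσ a τ → Typed St Δ hσ (.newref τ a) (.ref τ)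
  | deref : Typed St Δ hσ a (.ref τ) → Typed St Δ hσ (.deref a) τ
  | assign : Typed St Δ hσ a (.ref τ) → Typed St Δ hσ b τ → Typed St Δ hσ (.assign a b) .unit
  | ifte : Typed St Δ hσ a .bool → Typed St Δ hσ b τ → Typed St Δ hσ c τ →
      Typed St Δ hσ (.ifte a b c) τ
  | arith : Typed St Δ hσ a .int → Typed St Δ hσ b .int → Typed St Δ hσ (.arith op a b) .int
  | cmp : Typed St Δ hσ a .int → Typed St Δ hσ b .int → Typed St Δ hσ (.cmp op a b) .bool
  | refeq : Typed St Δ hσ a (.ref τ) → Typed St Δ hσ b (.ref τ) →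
      Typed St Δ hσ (.refeq a b) .bool
  | callcc : Typed St (Ty.cont τ :: Δ) hσ M τ → Typed St Δ hσ (.callcc τ M) τ
  | throw : Typed St Δ hσ a σ → Typed St Δ hσ b (.cont σ) → Typed St Δ hσ (.throw τ a b) τ
  | contV : IsECtx K → Typed St Δ (some τ) K σ → Typed St Δ hσ (.contV τ σ K) (.cont τ)
  | contE {c : CName} : IsECtx K → Typed St Δ (some τ) K c.ty →
      Typed St Δ hσ (.contE τ K c) (.cont τ)

/-! ## Heaps and operational semantics -/

abbrev Heap := ℕ → Option Tm

def Heap.empty : Heap := fun _ => none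
def Heap.upd (h : Heap) (ℓ : ℕ) (V : Tm) : Heap := fun ℓ' => if ℓ' = ℓ then some V else h ℓ'

def HeapTyped (St : LocTy) (h : Heap) : Prop :=
  ∀ ℓ τ, St ℓ = some τ → ∃ V, h ℓ = some V ∧ IsVal V ∧ Typed St [] none V τ

def Heap.inFrag (x : Frag) (h : Heap) : Prop := ∀ ℓ V, h ℓ = some V → Tm.inFrag x V
def Heap.inFragX (x : Frag) (h : Heap) : Prop := ∀ ℓ V, h ℓ = some V → Tm.inFragX x V

def ArithOp.eval : ArithOp → ℤ → ℤ → ℤ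
  | .add, m, n => m + n
  | .sub, m, n => m - n
  | .mul, m, n => m * n

def CmpOp.eval : CmpOp → ℤ → ℤ → Bool
  | .eq, m, n => decide (m = n)
  | .lt, m, n => decide (m < n)

def Tm.ofBool (b : Bool) : Tm := if b then .tt else .ff

/-- head reduction rules (the rules of Figure 2 not involving continuations) -/
inductive RedBase : Tm → Heap → Tm → Heap → Prop
  | beta {σ : Ty} {M V : Tm} {h : Heap} : IsVal V →
      RedBase (.app (.lam σ M) V) h (M.subst 0 V) h
  | fixbeta {σ τ : Ty} {M V : Tm} {h : Heap} : IsVal V →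
      RedBase (.app (.fix σ τ M) V) h ((M.subst 0 V).subst 0 (.fix σ τ M)) h
  | fst {v₁ v₂ : Tm} {h : Heap} : IsVal v₁ → IsVal v₂ → RedBase (.fst (.pair v₁ v₂)) h v₁ h
  | snd {v₁ v₂ : Tm} {h : Heap} : IsVal v₁ → IsVal v₂ → RedBase (.snd (.pair v₁ v₂)) h v₂ h
  | iftt {M N : Tm} {h : Heap} : RedBase (.ifte .tt M N) h M h
  | ifff {M N : Tm} {h : Heap} : RedBase (.ifte .ff M N) h N h
  | arith {op} {m n : ℤ} {h : Heap} :
      RedBase (.arith op (.int m) (.int n)) h (.int (op.eval m n)) h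
  | cmp {op} {m n : ℤ} {h : Heap} :
      RedBase (.cmp op (.int m) (.int n)) h (Tm.ofBool (op.eval m n)) h
  | refeq {ℓ ℓ' : ℕ} {h : Heap} :
      RedBase (.refeq (.loc ℓ) (.loc ℓ')) h (Tm.ofBool (decide (ℓ = ℓ'))) h
  | deref {ℓ : ℕ} {V : Tm} {h : Heap} : h ℓ = some V → RedBase (.deref (.loc ℓ)) h V h
  | newref {τ : Ty} {V : Tm} {ℓ : ℕ} {h : Heap} : IsVal V → h ℓ = none →
      RedBase (.newref τ V) h (.loc ℓ) (Heap.upd h ℓ V)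
  | assign {ℓ : ℕ} {V : Tm} {h : Heap} : IsVal V → h ℓ ≠ none →
      RedBase (.assign (.loc ℓ) V) h .unit (Heap.upd h ℓ V)

/-- the operational reduction (M,h) → (M',h') of HOSC (Figure 2) -/
inductive Red : Tm → Heap → Tm → Heap → Prop
  | base {K M M' : Tm} {h h' : Heap} : IsECtx K → RedBase M h M' h' →
      Red (K.fill M) h (K.fill M') h'
  | callcc {τ σ : Ty} {K M : Tm} {h : Heap} : IsECtx K →
      Red (K.fill (.callcc τ M)) h (K.fill (M.subst 0 (.contV τ σ K))) h
  | throw {τ σ σ' : Ty} {K K' V : Tm} {h : Heap} : IsECtx K → IsECtx K' → IsVal V →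
      Red (K.fill (.throw τ V (.contV σ σ' K'))) h (K'.fill V) h

def RedStar : Tm × Heap → Tm × Heap → Prop :=
  Relation.ReflTransGen (fun p q => Red p.1 p.2 q.1 q.2)

/-- (M,h) ⇓_ter -/
def TerObs (M : Tm) (h : Heap) : Prop := ∃ V h', RedStar (M, h) (V, h') ∧ IsVal V

/-- (M,h) ⇓_err : reaching K[err()] -/
def ErrObs (M : Tm) (h : Heap) : Prop :=
  ∃ K h', IsECtx K ∧ RedStar (M, h) (K.fill (.app .errv .unit), h')

/-- the extended operational semantics (M,c,h) → (M',c',h') with continuation names -/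
inductive ERed : Tm → CName → Heap → Tm → CName → Heap → Prop
  | base {K M M' : Tm} {c : CName} {h h' : Heap} : IsECtx K → RedBase M h M' h' →
      ERed (K.fill M) c h (K.fill M') c h'
  | callcc {τ : Ty} {K M : Tm} {c : CName} {h : Heap} : IsECtx K →
      ERed (K.fill (.callcc τ M)) c h (K.fill (M.subst 0 (.contE τ K c))) c h
  | throw {τ σ : Ty} {K K' V : Tm} {c c' : CName} {h : Heap} :
      IsECtx K → IsECtx K' → IsVal V →
      ERed (K.fill (.throw τ V (.contE σ K' c'))) c h (K'.fill V) c' h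

/-! ## Contextual and CIU approximation -/

inductive TKind | ter | err

def TKind.obs : TKind → Tm → Heap → Prop
  | .ter => TerObs
  | .err => ErrObs

def Tm.noErr (M : Tm) : Prop := Tm.errv ∉ M.subterms

/-- contextual approximation ≲_y^x : testing with contexts built from x-syntax,
observing y (for y = ter the context may not use the error variable). -/
def CtxApprox (x : Frag) (y : TKind) (Γ : TyCtx) (τ : Ty) (M₁ M₂ : Tm) : Prop :=
  ∀ C τ', Tm.inFrag x C → C.holeCount = 1 → (y = .ter → C.noErr) →
    (∀ N, Typed emptyLocTy Γ none N τ → Typed emptyLocTy [] none (C.fill N) τ') →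
    y.obs (C.fill M₁) Heap.empty → y.obs (C.fill M₂) Heap.empty

/-- γ is a substitution of closed values for the variables in Γ -/
def SubstTyped (St : LocTy) (γ : List Tm) (Γ : TyCtx) : Prop :=
  List.Forall₂ (fun V σ => IsVal V ∧ Typed St [] none V σ) γ Γ

/-- CIU approximation ≲_{ciu,y}^x -/
def CIU (x : Frag) (y : TKind) (Γ : TyCtx) (τ : Ty) (M₁ M₂ : Tm) : Prop :=
  ∀ St h K γ τ',
    HeapTyped St h → Heap.inFrag x h → (y = .ter → ∀ ℓ V, h ℓ = some V → Tm.noErr V) →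
    IsECtx K → Tm.inFrag x K → (y = .ter → K.noErr) → Typed St [] (some τ) K τ' →
    SubstTyped St γ Γ → (∀ V ∈ γ, Tm.inFrag x V) → (y = .ter → ∀ V ∈ γ, Tm.noErr V) →
    y.obs (K.fill (M₁.msubst γ)) h → y.obs (K.fill (M₂.msubst γ)) h

/-- cr-free terms -/
structure CrFreeTm (Γ : TyCtx) (M : Tm) (τ : Ty) : Prop where
  typed : Typed emptyLocTy Γ none M τ
  synt : M.crFreeSyn
  noName : ∀ f, Tm.fname f ∉ M.subterms
  noErrv : M.noErr
  bndΓ : ∀ σ ∈ Γ, σ.crFree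
  bndτ : τ.crFree

/-! ## Abstract values, actions, traces -/

inductive AVal
  | unit | tt | ff
  | int : ℤ → AVal
  | fn : FName → AVal
  | pair : AVal → AVal → AVal

def AVal.toTm : AVal → Tm
  | .unit => .unit
  | .tt => .tt
  | .ff => .ff
  | .int n => .int n
  | .fn f => .fname f
  | .pair a b => .pair a.toTm b.toTm

def AVal.names : AVal → Set Name
  | .fn f => {Name.fn f}
  | .pair a b => a.names ∪ b.names
  | _ => ∅

/-- each name occurs at most once -/
def AVal.linear : AVal → Prop
  | .pair a b => a.linear ∧ b.linear ∧ a.names ∩ b.names = ∅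
  | _ => True

inductive AVal.HasTy : AVal → Ty → Prop
  | unit : AVal.HasTy .unit .unit
  | tt : AVal.HasTy .tt .bool
  | ff : AVal.HasTy .ff .bool
  | int (n : ℤ) : AVal.HasTy (.int n) .int
  | fn (f : FName) : AVal.HasTy (.fn f) (.arrow f.dom f.cod)
  | pair {a b σ τ} : AVal.HasTy a σ → AVal.HasTy b τ → AVal.HasTy (.pair a b) (.prod σ τ)

abbrev FEnv := FName → Option Tm
abbrev KEnv := CName → Option Tm
abbrev XiEnv := CName → Option (Option CName)

/-- decomposition of a closed value into an abstract value pattern and a matching -/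
inductive Decomp : Tm → Ty → AVal → FEnv → Prop
  | unit : Decomp .unit .unit .unit (fun _ => none)
  | tt : Decomp .tt .bool .tt (fun _ => none)
  | ff : Decomp .ff .bool .ff (fun _ => none)
  | int (n : ℤ) : Decomp (.int n) .int (.int n) (fun _ => none)
  | fn {V : Tm} {f : FName} : IsVal V →
      Decomp V (.arrow f.dom f.cod) (.fn f) (Function.update (fun _ => none) f (some V))
  | pair {u v : Tm} {σ τ : Ty} {A B : AVal} {ga gb : FEnv} :
      Decomp u σ A ga → Decomp v τ B gb → (∀ f, ga f = none ∨ gb f = none) →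
      Decomp (.pair u v) (.prod σ τ) (.pair A B) (fun f => (ga f) <|> (gb f))

inductive Act
  | pa : CName → AVal → Act
  | pq : FName → AVal → CName → Act
  | oa : CName → AVal → Act
  | oq : FName → AVal → CName → Act

def Act.isP : Act → Bool
  | .pa _ _ => true
  | .pq _ _ _ => true
  | .oa _ _ => false
  | .oq _ _ _ => false

def Act.dual : Act → Act
  | .pa c A => .oa c A
  | .pq f A c => .oq f A c
  | .oa c A => .pa c A
  | .oq f A c => .pq f A c

/-- names introduced by an action -/
def Act.intro : Act → Set Name
  | .pa _ A => A.names
  | .oa _ A => A.names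
  | .pq _ A c => A.names ∪ {Name.cn c}
  | .oq _ A c => A.names ∪ {Name.cn c}

/-- the name used to communicate -/
def Act.subject : Act → Name
  | .pa c _ => Name.cn c
  | .oa c _ => Name.cn c
  | .pq f _ _ => Name.fn f
  | .oq f _ _ => Name.fn f

def Act.names (a : Act) : Set Name := {a.subject} ∪ a.intro

def Act.wf : Act → Prop
  | .pa _ A => A.linear
  | .oa _ A => A.linear
  | .pq _ A c => A.linear ∧ Name.cn c ∉ A.names
  | .oq _ A c => A.linear ∧ Name.cn c ∉ A.names

def traceNames (t : List Act) : Set Name := {n | ∃ a ∈ t, n ∈ a.names}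

def introducedBefore (pol : Bool) (t : List Act) (i : ℕ) : Set Name :=
  {n | ∃ j, ∃ hj : j < t.length, j < i ∧ (t[j]'hj).isP = pol ∧ n ∈ (t[j]'hj).intro}

/-- (N_O, N_P)-traces -/
def IsTrace (NO NP : Set Name) (t : List Act) : Prop :=
  List.Chain' (fun a b => a.isP ≠ b.isP) t ∧
  (∀ a ∈ t, a.wf) ∧
  (∀ a ∈ t, a.intro ∩ (NO ∪ NP) = ∅) ∧
  (∀ i, ∀ hi : i < t.length, ∀ j, ∀ hj : j < t.length, i ≠ j →
      (t[i]'hi).intro ∩ (t[j]'hj).intro = ∅) ∧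
  (∀ i, ∀ hi : i < t.length,
      (t[i]'hi).subject ∈
        (if (t[i]'hi).isP then NO else NP) ∪ introducedBefore (!(t[i]'hi).isP) t i)

/-! ## The LTS -/

structure ACfg where
  tm : Tm
  cur : CName
  gf : FEnv
  gc : KEnv
  xi : XiEnv
  phi : Set Name
  hp : Heap
  Fm : Name → Option (Set Name)

structure PCfg where
  gf : FEnv
  gc : KEnv
  xi : XiEnv
  phi : Set Name
  hp : Heap
  Fm : Name → Option (Set Name)
  avail : Set Name
  topc : Option CName

inductive Cfg
  | act : ACfg → Cfg
  | pas : PCfg → Cfg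

def joinF (a b : FEnv) : FEnv := fun f => (a f) <|> (b f)

open Classical in
noncomputable def extendF (F : Name → Option (Set Name)) (s av : Set Name) :
    Name → Option (Set Name) :=
  fun n => if n ∈ s then some av else F n

/-- The (unified) LTS. With `vis = bra = false` this is the HOSC[HOSC] LTS;
`vis = true` adds the O-visibility restriction (GOSC[HOSC]);
`bra = true` adds the O-bracketing restriction (HOS[HOSC]); both give GOS[HOSC]. -/
inductive Step : Bool → Bool → Cfg → Option Act → Cfg → Prop
  | tau {vis bra : Bool} {M N : Tm} {c c' : CName} {gf : FEnv} {gc : KEnv} {xi : XiEnv}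
      {phi : Set Name} {h h' : Heap} {F : Name → Option (Set Name)} :
      ERed M c h N c' h' →
      Step vis bra (.act ⟨M, c, gf, gc, xi, phi, h, F⟩) none
        (.act ⟨N, c', gf, gc, xi, phi, h', F⟩)
  | pa {vis bra : Bool} {V : Tm} {c : CName} {A : AVal} {g' : FEnv} {gf : FEnv} {gc : KEnv}
      {xi : XiEnv} {phi : Set Name} {h : Heap} {F : Name → Option (Set Name)} :
      IsVal V → Decomp V c.ty A g' → A.linear → A.names ∩ phi = ∅ →
      Step vis bra (.act ⟨V, c, gf, gc, xi, phi, h, F⟩) (some (.pa c A))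
        (.pas ⟨joinF gf g', gc, xi, phi ∪ A.names, h, F,
               (F (Name.cn c)).getD ∅ ∪ A.names, Option.join (xi c)⟩)
  | pq {vis bra : Bool} {K V : Tm} {f : FName} {A : AVal} {c c' : CName} {g' : FEnv}
      {gf : FEnv} {gc : KEnv} {xi : XiEnv} {phi : Set Name} {h : Heap}
      {F : Name → Option (Set Name)} :
      IsECtx K → IsVal V → Decomp V f.dom A g' → A.linear →
      c'.ty = f.cod → (A.names ∪ {Name.cn c'}) ∩ phi = ∅ → Name.cn c' ∉ A.names →
      Step vis bra (.act ⟨K.fill (.app (.fname f) V), c, gf, gc, xi, phi, h, F⟩)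
        (some (.pq f A c'))
        (.pas ⟨joinF gf g', Function.update gc c' (some K),
               Function.update xi c' (some (some c)),
               phi ∪ A.names ∪ {Name.cn c'}, h, F,
               (F (Name.fn f)).getD ∅ ∪ A.names ∪ {Name.cn c'}, some c'⟩)
  | oa {vis bra : Bool} {K : Tm} {c c' : CName} {A : AVal} {gf : FEnv} {gc : KEnv}
      {xi : XiEnv} {phi : Set Name} {h : Heap} {F : Name → Option (Set Name)}
      {av : Set Name} {tc : Option CName} :
      AVal.HasTy A c.ty → A.linear → A.names ∩ phi = ∅ →
      gc c = some K → xi c = some (some c') →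
      (vis = true → Name.cn c ∈ av) → (bra = true → tc = some c) →
      Step vis bra (.pas ⟨gf, gc, xi, phi, h, F, av, tc⟩) (some (.oa c A))
        (.act ⟨K.fill A.toTm, c', gf, gc, xi, phi ∪ A.names, h, extendF F A.names av⟩)
  | oq {vis bra : Bool} {V : Tm} {f : FName} {A : AVal} {c : CName} {gf : FEnv} {gc : KEnv}
      {xi : XiEnv} {phi : Set Name} {h : Heap} {F : Name → Option (Set Name)}
      {av : Set Name} {tc : Option CName} :
      AVal.HasTy A f.dom → A.linear → c.ty = f.cod →
      (A.names ∪ {Name.cn c}) ∩ phi = ∅ → Name.cn c ∉ A.names →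
      gf f = some V →
      (vis = true → Name.fn f ∈ av) →
      Step vis bra (.pas ⟨gf, gc, xi, phi, h, F, av, tc⟩) (some (.oq f A c))
        (.act ⟨.app V A.toTm, c, gf, gc, Function.update xi c (some tc),
               phi ∪ A.names ∪ {Name.cn c}, h, extendF F (A.names ∪ {Name.cn c}) av⟩)

inductive Steps (vis bra : Bool) : Cfg → List Act → Cfg → Prop
  | nil {C : Cfg} : Steps vis bra C [] C
  | tau {C C' C'' : Cfg} {t : List Act} :
      Step vis bra C none C' → Steps vis bra C' t C'' → Steps vis bra C t C''
  | cons {C C' C'' : Cfg} {a : Act} {t : List Act} :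
      Step vis bra C (some a) C' → Steps vis bra C' t C'' → Steps vis bra C (a :: t) C''

def Traces (vis bra : Bool) (C : Cfg) : Set (List Act) := {t | ∃ C', Steps vis bra C t C'}

/-! ## Initial configurations and trace semantics -/

def AssignTyped (ρ : List AVal) (Γ : TyCtx) : Prop :=
  List.Forall₂ (fun A σ => AVal.HasTy A σ ∧ AVal.linear A) ρ Γ ∧
  List.Pairwise (fun A B => A.names ∩ B.names = ∅) ρ

def assignNames (ρ : List AVal) : Set Name := {n | ∃ A ∈ ρ, n ∈ A.names}

def initTm (M : Tm) (ρ : List AVal) : Tm := M.msubst (ρ.map AVal.toTm)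

def emptyF : Name → Option (Set Name) := fun _ => none

/-- C_M^{ρ,c} = ⟨M{ρ}, c, ∅, ∅, ν(ρ)∪{c}, ∅⟩ -/
def cfgInit (M : Tm) (ρ : List AVal) (c : CName) : Cfg :=
  .act ⟨initTm M ρ, c, (fun _ => none), (fun _ => none), (fun _ => none),
        assignNames ρ ∪ {Name.cn c}, Heap.empty, emptyF⟩

/-- C_{M,bra}^{ρ,c}: ξ initialized with [c ↦ ⊥] -/
def cfgInitBra (M : Tm) (ρ : List AVal) (c : CName) : Cfg :=
  .act ⟨initTm M ρ, c, (fun _ => none), (fun _ => none),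
        Function.update (fun _ => none : XiEnv) c (some none),
        assignNames ρ ∪ {Name.cn c}, Heap.empty, emptyF⟩

def TrSemHOSC (Γ : TyCtx) (τ : Ty) (M : Tm) : Set ((List AVal × CName) × List Act) :=
  {p | AssignTyped p.1.1 Γ ∧ p.1.2.ty = τ ∧ p.2 ∈ Traces false false (cfgInit M p.1.1 p.1.2)}

def TrSemGOSC (Γ : TyCtx) (τ : Ty) (M : Tm) : Set ((List AVal × CName) × List Act) :=
  {p | AssignTyped p.1.1 Γ ∧ p.1.2.ty = τ ∧ p.2 ∈ Traces true false (cfgInit M p.1.1 p.1.2)}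

def TrSemHOS (Γ : TyCtx) (τ : Ty) (M : Tm) : Set ((List AVal × CName) × List Act) :=
  {p | AssignTyped p.1.1 Γ ∧ p.1.2.ty = τ ∧ p.2 ∈ Traces false true (cfgInitBra M p.1.1 p.1.2)}

def TrSemGOS (Γ : TyCtx) (τ : Ty) (M : Tm) : Set ((List AVal × CName) × List Act) :=
  {p | AssignTyped p.1.1 Γ ∧ p.1.2.ty = τ ∧ p.2 ∈ Traces true true (cfgInitBra M p.1.1 p.1.2)}

/-! ## The ◦-translation and context configurations -/

/-- replace err by errn and each cont_τ(K) (with K : τ ⇒ σ) by cont_τ(K, ◦_σ) -/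
def Tm.toCirc : Tm → Tm
  | .errv => .fname errn
  | .contV τ σ K => .contE τ K.toCirc (tern σ)
  | .contE τ K c => .contE τ K.toCirc c
  | .pair a b => .pair a.toCirc b.toCirc
  | .fst a => .fst a.toCirc
  | .snd a => .snd a.toCirc
  | .lam τ a => .lam τ a.toCirc
  | .fix σ τ a => .fix σ τ a.toCirc
  | .app a b => .app a.toCirc b.toCirc
  | .newref τ a => .newref τ a.toCirc
  | .deref a => .deref a.toCirc
  | .assign a b => .assign a.toCirc b.toCirc
  | .ifte a b c => .ifte a.toCirc b.toCirc c.toCirc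
  | .arith op a b => .arith op a.toCirc b.toCirc
  | .cmp op a b => .cmp op a.toCirc b.toCirc
  | .refeq a b => .refeq a.toCirc b.toCirc
  | .callcc τ a => .callcc τ a.toCirc
  | .throw τ a b => .throw τ a.toCirc b.toCirc
  | t => t

def Heap.toCirc (h : Heap) : Heap := fun ℓ => (h ℓ).map Tm.toCirc

/-- (A⃗ᵢ, γ⃗ᵢ) ∈ AVal(γ)(Γ): componentwise decomposition of γ_◦ with mutually
disjoint names avoiding errn -/
def CtxDecomp (γ : List Tm) (Γ : TyCtx) (As : List AVal) (γs : List FEnv) : Prop :=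
  γ.length = Γ.length ∧ As.length = Γ.length ∧ γs.length = Γ.length ∧
  List.Forall₂ (fun (p : Tm × Ty) (q : AVal × FEnv) => Decomp p.1.toCirc p.2 q.1 q.2)
    (γ.zip Γ) (As.zip γs) ∧
  List.Pairwise (fun A B => A.names ∩ B.names = ∅) As ∧
  (∀ A ∈ As, Name.fn errn ∉ A.names) ∧
  (∀ A ∈ As, A.linear)

def stackF (γs : List FEnv) : FEnv := fun f => γs.foldr (fun ρ acc => (ρ f) <|> acc) none

/-- the context configuration C_{h,K,γ}^{γ⃗ᵢ,c} -/
def cfgCtx (h : Heap) (K : Tm) (As : List AVal) (γs : List FEnv) (c : CName) (τ' : Ty) : Cfg :=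
  .pas ⟨stackF γs,
        Function.update (fun _ => none : KEnv) c (some K.toCirc),
        Function.update (fun _ => none : XiEnv) c (some (some (tern τ'))),
        {n | ∃ A ∈ As, n ∈ A.names} ∪ {Name.cn c} ∪ circNames ∪ {Name.fn errn},
        Heap.toCirc h, emptyF, Set.univ, none⟩

/-- the passive configuration of the definability lemmas:
⟨γ_◦ · [c ↦ K_◦], {c ↦ tern_{τ'}}, φ ⊎ {c} ⊎ ◦ ⊎ {errn}, h_◦⟩ -/
def cfgDef (h : Heap) (K : Tm) (γ : FEnv) (c : CName) (τ' : Ty) (φ : Set Name) : Cfg :=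
  .pas ⟨(fun f => (γ f).map Tm.toCirc),
        Function.update (fun _ => none : KEnv) c (some K.toCirc),
        Function.update (fun _ => none : XiEnv) c (some (some (tern τ'))),
        φ ∪ {Name.cn c} ∪ circNames ∪ {Name.fn errn},
        Heap.toCirc h, emptyF, Set.univ, none⟩

/-! ## Name permutations -/

structure NPerm where
  pf : Equiv.Perm FName
  pc : Equiv.Perm CName
  tpf : ∀ f : FName, (pf f).dom = f.dom ∧ (pf f).cod = f.cod
  tpc : ∀ c : CName, (pc c).ty = c.ty

def NPerm.name (π : NPerm) : Name → Name
  | .fn f => .fn (π.pf f)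
  | .cn c => .cn (π.pc c)

def NPerm.fixes (π : NPerm) (X : Set Name) : Prop := ∀ n ∈ X, π.name n = n

def AVal.rename (π : NPerm) : AVal → AVal
  | .fn f => .fn (π.pf f)
  | .pair a b => .pair (a.rename π) (b.rename π)
  | a => a

def Act.rename (π : NPerm) : Act → Act
  | .pa c A => .pa (π.pc c) (A.rename π)
  | .pq f A c => .pq (π.pf f) (A.rename π) (π.pc c)
  | .oa c A => .oa (π.pc c) (A.rename π)
  | .oq f A c => .oq (π.pf f) (A.rename π) (π.pc c)

/-! ## Visibility -/

/-- the set Vis_P(t) of P-visible names of an odd-length (◦⊎{errn}, φ⊎{c})-trace -/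
inductive VisP (φ : Set Name) (c : CName) : List Act → Set Name → Prop
  | ansInit (t : List Act) (A : AVal) :
      VisP φ c (t ++ [.oa c A]) ({Name.fn errn} ∪ circNames ∪ A.names)
  | ansJust {t t' : List Act} {S : Set Name} (f : FName) (A'' : AVal) (c' : CName) (A' : AVal) :
      VisP φ c t S → c' ≠ c →
      VisP φ c (t ++ [.pq f A'' c'] ++ t' ++ [.oa c' A']) (S ∪ A'.names)
  | qInit (t : List Act) (f' : FName) (A' : AVal) (c' : CName) : Name.fn f' ∈ φ →
      VisP φ c (t ++ [.oq f' A' c']) ({Name.fn errn} ∪ circNames ∪ A'.names ∪ {Name.cn c'})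
  | qJustQ {t t' : List Act} {S : Set Name} (f'' : FName) (A'' : AVal) (c'' : CName)
      (f' : FName) (A' : AVal) (c' : CName) :
      VisP φ c t S → Name.fn f' ∈ A''.names →
      VisP φ c (t ++ [.pq f'' A'' c''] ++ t' ++ [.oq f' A' c']) (S ∪ A'.names ∪ {Name.cn c'})
  | qJustA {t t' : List Act} {S : Set Name} (c'' : CName) (A'' : AVal)
      (f' : FName) (A' : AVal) (c' : CName) :
      VisP φ c t S → Name.fn f' ∈ A''.names →
      VisP φ c (t ++ [.pa c'' A''] ++ t' ++ [.oq f' A' c']) (S ∪ A'.names ∪ {Name.cn c'})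

/-- P-visibility of a (◦⊎{errn}, φ⊎{c})-trace -/
def PVisible (φ : Set Name) (c : CName) (t : List Act) : Prop :=
  (∀ pre f A d, pre ++ [Act.pq f A d] <+: t → Even (pre.length + 1) →
      ∃ S, VisP φ c pre S ∧ Name.fn f ∈ S) ∧
  (∀ pre d A, pre ++ [Act.pa d A] <+: t → Even (pre.length + 1) →
      ∃ S, VisP φ c pre S ∧ Name.cn d ∈ S)

/-- the set Vis_O(t) of O-visible names of an odd-length (φ⊎{c}, ∅)-trace -/
inductive VisO (φ : Set Name) (c : CName) : List Act → Set Name → Prop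
  | ansInit (t : List Act) (A : AVal) :
      VisO φ c (t ++ [.pa c A]) A.names
  | ansJust {t t' : List Act} {S : Set Name} (f : FName) (A'' : AVal) (c' : CName) (A' : AVal) :
      VisO φ c t S → c' ≠ c →
      VisO φ c (t ++ [.oq f A'' c'] ++ t' ++ [.pa c' A']) (S ∪ A'.names)
  | qInit (t : List Act) (f' : FName) (A' : AVal) (c' : CName) : Name.fn f' ∈ φ →
      VisO φ c (t ++ [.pq f' A' c']) (A'.names ∪ {Name.cn c'})
  | qJustQ {t t' : List Act} {S : Set Name} (f'' : FName) (A'' : AVal) (c'' : CName)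
      (f' : FName) (A' : AVal) (c' : CName) :
      VisO φ c t S → Name.fn f' ∈ A''.names →
      VisO φ c (t ++ [.oq f'' A'' c''] ++ t' ++ [.pq f' A' c']) (S ∪ A'.names ∪ {Name.cn c'})
  | qJustA {t t' : List Act} {S : Set Name} (c'' : CName) (A'' : AVal)
      (f' : FName) (A' : AVal) (c' : CName) :
      VisO φ c t S → Name.fn f' ∈ A''.names →
      VisO φ c (t ++ [.oa c'' A''] ++ t' ++ [.pq f' A' c']) (S ∪ A'.names ∪ {Name.cn c'})

/-- O-visibility of a (φ⊎{c}, ∅)-trace -/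
def OVisible (φ : Set Name) (c : CName) (t : List Act) : Prop :=
  (∀ pre f A d, pre ++ [Act.oq f A d] <+: t → Even (pre.length + 1) →
      ∃ S, VisO φ c pre S ∧ Name.fn f ∈ S) ∧
  (∀ pre d A, pre ++ [Act.oa d A] <+: t → Even (pre.length + 1) →
      ∃ S, VisO φ c pre S ∧ Name.cn d ∈ S)

/-! ## Bracketing -/

/-- top_P(t) for odd-length ({◦_{τ'},errn}, φ⊎{c})-traces -/
inductive TopP (c : CName) (τ' : Ty) : List Act → Option CName → Prop
  | ansInit (t : List Act) (A : AVal) : TopP c τ' (t ++ [.oa c A]) (some (tern τ'))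
  | ansJust {t₁ t₂ : List Act} {r : Option CName} (f : FName) (A'' : AVal) (c' : CName)
      (A' : AVal) :
      TopP c τ' t₁ r → TopP c τ' (t₁ ++ [.pq f A'' c'] ++ t₂ ++ [.oa c' A']) r
  | quest (t : List Act) (f : FName) (A' : AVal) (c' : CName) :
      TopP c τ' (t ++ [.oq f A' c']) (some c')

/-- P-bracketing: each P-answer answers the current top continuation -/
def PBracketed (c : CName) (τ' : Ty) (t : List Act) : Prop :=
  ∀ pre d A, pre ++ [Act.pa d A] <+: t → ∃ r, TopP c τ' pre r ∧ r = some d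

/-- top_O(t) for odd-length (φ⊎{c}, ∅)-traces; `none` is ⊥ -/
inductive TopO (c : CName) : List Act → Option CName → Prop
  | ansInit (t : List Act) (A : AVal) : TopO c (t ++ [.pa c A]) none
  | ansJust {t₁ t₂ : List Act} {r : Option CName} (f : FName) (A'' : AVal) (c' : CName)
      (A' : AVal) :
      TopO c t₁ r → TopO c (t₁ ++ [.oq f A'' c'] ++ t₂ ++ [.pa c' A']) r
  | quest (t : List Act) (f : FName) (A' : AVal) (c' : CName) :
      TopO c (t ++ [.pq f A' c']) (some c')

/-- O-bracketing: each O-answer answers the current top continuation -/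
def OBracketed (c : CName) (t : List Act) : Prop :=
  ∀ pre d A, pre ++ [Act.oa d A] <+: t → TopO c pre (some d)

/-- complete traces -/
def CompleteTr (c : CName) (t : List Act) : Prop :=
  Odd t.length ∧ OBracketed c t ∧ TopO c t none

/-- trace inclusion restricted to complete traces -/
def TrIncC (S₁ S₂ : Set ((List AVal × CName) × List Act)) : Prop :=
  ∀ p ∈ S₁, CompleteTr p.1.2 p.2 → p ∈ S₂


/-!
The two LTSs differ in two places only: the initial `ξ` of `C_{M,bra}` records `⊥` for `c`
where that of `C_M` records nothing, which no rule can tell apart once `Option.join` is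
applied; and an O-answer of the HOS LTS must be at the top continuation `tc` of the passive
configuration. So it suffices that along every run, `tc` is the unique `r` with `TopO c t r`
for the trace `t` produced so far.

This holds because `ξ d` records `top_O` at the moment the O-question introducing `d` was
asked, and every continuation name that can become current (the caller recorded for a
P-question, or a name captured by `callcc` and later thrown to) is either `c` or was
introduced by an O-question.
-/

def Tm.contNames : Tm → Set CName
  | .pair a b => a.contNames ∪ b.contNames
  | .fst a => a.contNames
  | .snd a => a.contNames
  | .lam _ a => a.contNames
  | .fix _ _ a => a.contNames
  | .app a b => a.contNames ∪ b.contNames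
  | .newref _ a => a.contNames
  | .deref a => a.contNames
  | .assign a b => a.contNames ∪ b.contNames
  | .ifte a b c => a.contNames ∪ b.contNames ∪ c.contNames
  | .arith _ a b => a.contNames ∪ b.contNames
  | .cmp _ a b => a.contNames ∪ b.contNames
  | .refeq a b => a.contNames ∪ b.contNames
  | .callcc _ a => a.contNames
  | .throw _ a b => a.contNames ∪ b.contNames
  | .contV _ _ K => K.contNames
  | .contE _ K c => insert c K.contNames
  | _ => ∅

theorem Tm.contNames_subst_subset (M : Tm) (k : ℕ) (V : Tm) :
    (M.subst k V).contNames ⊆ M.contNames ∪ V.contNames := by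
  induction M generalizing k <;> simp only [Tm.subst, Tm.contNames] <;> try grind
  case bvar i => split_ifs <;> simp [Tm.contNames]

theorem Tm.contNames_fill_subset (K X : Tm) :
    (K.fill X).contNames ⊆ K.contNames ∪ X.contNames := by
  induction K <;> simp only [Tm.fill, Tm.contNames] <;> grind

theorem Tm.contNames_subset_fill (K X : Tm) : K.contNames ⊆ (K.fill X).contNames := by
  induction K <;> simp only [Tm.fill, Tm.contNames] <;> grind

theorem IsECtx.contNames_subset_fill {K : Tm} (hK : IsECtx K) (X : Tm) :
    X.contNames ⊆ (K.fill X).contNames := by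
  induction hK <;> simp only [Tm.fill, Tm.contNames] <;> grind

@[simp]
theorem AVal.contNames_toTm (A : AVal) : A.toTm.contNames = ∅ := by
  induction A <;> simp_all [AVal.toTm, Tm.contNames]

@[simp]
theorem Tm.contNames_ofBool (b : Bool) : (Tm.ofBool b).contNames = ∅ := by
  cases b <;> rfl

theorem Tm.contNames_eq_empty_of_contE_free {M : Tm}
    (hM : ∀ τ K c, Tm.contE τ K c ∉ M.subterms) : M.contNames = ∅ := by
  induction M <;> simp_all [Tm.contNames, Tm.subterms]
  case contE => exact (hM _ _ _).1 rfl rfl rfl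

theorem contNames_initTm_subset (M : Tm) (ρ : List AVal) :
    (initTm M ρ).contNames ⊆ M.contNames := by
  induction ρ generalizing M with
  | nil => exact subset_rfl
  | cons A ρ ih =>
    calc (initTm M (A :: ρ)).contNames = (initTm (M.subst 0 A.toTm) ρ).contNames := rfl
      _ ⊆ (M.subst 0 A.toTm).contNames := ih _
      _ ⊆ M.contNames := by simpa using M.contNames_subst_subset 0 A.toTm

def contNamesOf {α : Type} (e : α → Option Tm) : Set CName :=
  {d | ∃ a V, e a = some V ∧ d ∈ V.contNames}

theorem contNames_subset_contNamesOf {α : Type} {e : α → Option Tm} {a : α} {V : Tm}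
    (h : e a = some V) : V.contNames ⊆ contNamesOf e :=
  fun _ hd => ⟨a, V, h, hd⟩

@[simp]
theorem contNamesOf_none {α : Type} : contNamesOf (fun _ : α => (none : Option Tm)) = ∅ := by
  simp [contNamesOf]

theorem contNamesOf_update_subset {α : Type} [DecidableEq α] (e : α → Option Tm) (a : α)
    (V : Tm) : contNamesOf (Function.update e a (some V)) ⊆ contNamesOf e ∪ V.contNames := by
  rintro d ⟨b, W, hW, hd⟩
  rcases eq_or_ne b a with rfl | hb
  · simp_all
  · exact Or.inl ⟨b, W, by simpa [hb] using hW, hd⟩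

theorem contNamesOf_joinF_subset (e e' : FEnv) :
    contNamesOf (joinF e e') ⊆ contNamesOf e ∪ contNamesOf e' := by
  rintro d ⟨f, W, hW, hd⟩
  rcases (Option.orElse_eq_some _ _ _).mp hW with hW | ⟨-, hW⟩
  exacts [Or.inl ⟨f, W, hW, hd⟩, Or.inr ⟨f, W, hW, hd⟩]

theorem Decomp.contNamesOf_subset {V : Tm} {τ : Ty} {A : AVal} {g : FEnv}
    (hD : Decomp V τ A g) : contNamesOf g ⊆ V.contNames := by
  induction hD with
  | fn => simpa using contNamesOf_update_subset (fun _ => none) _ _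
  | pair _ _ _ iha ihb =>
    exact (contNamesOf_joinF_subset _ _).trans (Set.union_subset_union iha ihb)
  | _ => simp

theorem Heap.upd_eq_update (h : Heap) (ℓ : ℕ) (V : Tm) :
    h.upd ℓ V = Function.update h ℓ (some V) := by
  funext ℓ'
  simp [Heap.upd, Function.update_apply]

theorem RedBase.contNames_subset {M M' : Tm} {h h' : Heap} (hB : RedBase M h M' h') :
    M'.contNames ∪ contNamesOf h' ⊆ M.contNames ∪ contNamesOf h := by
  cases hB with
  | @beta σ N V _ =>
    have := N.contNames_subst_subset 0 V
    simp only [Tm.contNames]; grind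
  | @fixbeta σ τ N V _ =>
    have := N.contNames_subst_subset 0 V
    have h₂ := (N.subst 0 V).contNames_subst_subset 0 (.fix σ τ N)
    simp only [Tm.contNames] at h₂ ⊢; grind
  | deref hV =>
    have := contNames_subset_contNamesOf hV
    simp only [Tm.contNames]; grind
  | @newref τ V ℓ _ _ _ =>
    have := contNamesOf_update_subset h ℓ V
    rw [Heap.upd_eq_update]; simp only [Tm.contNames]; grind
  | @assign ℓ V _ _ _ =>
    have := contNamesOf_update_subset h ℓ V
    rw [Heap.upd_eq_update]; simp only [Tm.contNames]; grind
  | _ => simp [Tm.contNames] <;> grind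

theorem ERed.contNames_subset {M N : Tm} {c c' : CName} {h h' : Heap}
    (hR : ERed M c h N c' h') :
    insert c' N.contNames ∪ contNamesOf h' ⊆ insert c M.contNames ∪ contNamesOf h := by
  intro d
  cases hR with
  | @base K X X' _ _ _ hK hB =>
    have := hB.contNames_subset (a := d)
    have := (K.contNames_fill_subset X') (a := d)
    have := (K.contNames_subset_fill X) (a := d)
    have := (hK.contNames_subset_fill X) (a := d)
    simp only [Set.mem_insert_iff, Set.mem_union] at *
    tauto
  | @callcc τ K X _ _ hK =>
    have := (K.contNames_fill_subset (X.subst 0 (.contE τ K c))) (a := d)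
    have := (X.contNames_subst_subset 0 (.contE τ K c)) (a := d)
    have := (K.contNames_subset_fill (.callcc τ X)) (a := d)
    have := (hK.contNames_subset_fill (.callcc τ X)) (a := d)
    simp only [Tm.contNames, Set.mem_insert_iff, Set.mem_union] at *
    tauto
  | @throw τ σ K K' V _ _ _ hK hK' hV =>
    have := (K'.contNames_fill_subset V) (a := d)
    have := (hK.contNames_subset_fill (.throw τ V (.contE σ K' c'))) (a := d)
    simp only [Tm.contNames, Set.mem_insert_iff, Set.mem_union] at *
    tauto

theorem append_singleton_eq_append_cons_append {α : Type} {t s₁ s₂ : List α} {x y : α}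
    (h : t ++ [x] = s₁ ++ [y] ++ s₂) :
    (t = s₁ ∧ x = y ∧ s₂ = []) ∨ ∃ s₂', s₂ = s₂' ++ [x] ∧ t = s₁ ++ [y] ++ s₂' := by
  rcases List.eq_nil_or_concat s₂ with rfl | ⟨s₂', z, rfl⟩
  · simp_all [List.append_singleton_inj]
  · simp only [List.concat_eq_append, ← List.append_assoc, List.append_singleton_inj] at h
    exact Or.inr ⟨s₂', by simp [h.2], h.1⟩

section TopO

variable {c₀ : CName} {t : List Act} {r : Option CName}

theorem topO_append_pq_iff {f : FName} {A : AVal} {c : CName} :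
    TopO c₀ (t ++ [.pq f A c]) r ↔ r = some c := by
  refine ⟨fun h => ?_, fun h => h ▸ .quest t f A c⟩
  generalize hu : t ++ [Act.pq f A c] = u at h
  cases h with
  | ansInit | ansJust => cases (List.append_singleton_inj.mp hu).2
  | quest => obtain ⟨-, ⟨⟩⟩ := List.append_singleton_inj.mp hu; rfl

theorem topO_append_pa_iff {d : CName} {A : AVal} :
    TopO c₀ (t ++ [.pa d A]) r ↔
      (d = c₀ ∧ r = none) ∨ ∃ s₁ f A' s₂, t = s₁ ++ [.oq f A' d] ++ s₂ ∧ TopO c₀ s₁ r := by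
  constructor
  · intro h
    generalize hu : t ++ [Act.pa d A] = u at h
    cases h with
    | ansInit =>
      obtain ⟨-, ⟨⟩⟩ := List.append_singleton_inj.mp hu
      exact Or.inl ⟨rfl, rfl⟩
    | ansJust f A'' c' A' h₁ =>
      obtain ⟨rfl, ⟨⟩⟩ := List.append_singleton_inj.mp hu
      exact Or.inr ⟨_, f, A'', _, rfl, h₁⟩
    | quest => cases (List.append_singleton_inj.mp hu).2
  · rintro (⟨rfl, rfl⟩ | ⟨s₁, f, A', s₂, rfl, h₁⟩)
    · exact .ansInit t A
    · exact .ansJust f A' d A h₁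

def oContNames (c₀ : CName) (t : List Act) : Set CName :=
  insert c₀ {d | ∃ s₁ f A s₂, t = s₁ ++ [Act.oq f A d] ++ s₂}

theorem oContNames_mono (s : List Act) : oContNames c₀ t ⊆ oContNames c₀ (t ++ s) := by
  rintro d (rfl | ⟨s₁, f, A, s₂, rfl⟩)
  · exact .inl rfl
  · exact .inr ⟨s₁, f, A, s₂ ++ s, by simp⟩

theorem mem_oContNames_append_oq (f : FName) (A : AVal) (d : CName) :
    d ∈ oContNames c₀ (t ++ [.oq f A d]) :=
  .inr ⟨t, f, A, [], by simp⟩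

def XiRecordsTopO (c₀ : CName) (t : List Act) (xi : XiEnv) (phi : Set Name) : Prop :=
  ∀ s₁ f A d s₂, t = s₁ ++ [Act.oq f A d] ++ s₂ →
    Name.cn d ∈ phi ∧ ∀ r, TopO c₀ s₁ r ↔ r = (xi d).join

theorem XiRecordsTopO.append {xi xi' : XiEnv} {phi phi' : Set Name} {x : Act}
    (R : XiRecordsTopO c₀ t xi phi) (hphi : phi ⊆ phi')
    (hxi : ∀ e, Name.cn e ∈ phi → xi' e = xi e)
    (hx : ∀ f A d, x = .oq f A d → Name.cn d ∈ phi' ∧ ∀ r, TopO c₀ t r ↔ r = (xi' d).join) :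
    XiRecordsTopO c₀ (t ++ [x]) xi' phi' := by
  intro s₁ f A d s₂ h
  rcases append_singleton_eq_append_cons_append h with ⟨rfl, rfl, -⟩ | ⟨s₂', -, ht⟩
  · exact hx f A d rfl
  · obtain ⟨hd, htop⟩ := R s₁ f A d s₂' ht
    exact ⟨hphi hd, by rwa [hxi d hd]⟩

theorem XiRecordsTopO.topO_append_pa_iff {xi : XiEnv} {phi : Set Name} {d : CName} {A : AVal}
    (R : XiRecordsTopO c₀ t xi phi) (h₀ : (xi c₀).join = none) (hd : d ∈ oContNames c₀ t) :
    TopO c₀ (t ++ [.pa d A]) r ↔ r = (xi d).join := by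
  rw [OGS.topO_append_pa_iff]
  constructor
  · rintro (⟨rfl, rfl⟩ | ⟨s₁, f, A', s₂, ht, h₁⟩)
    · exact h₀.symm
    · exact ((R s₁ f A' d s₂ ht).2 r).mp h₁
  · rintro rfl
    rcases hd with rfl | ⟨s₁, f, A', s₂, ht⟩
    · exact .inl ⟨rfl, h₀⟩
    · exact .inr ⟨s₁, f, A', s₂, ht, ((R s₁ f A' d s₂ ht).2 _).mpr rfl⟩

end TopO

structure EnvInv (c₀ : CName) (t : List Act) (gf : FEnv) (gc : KEnv) (xi : XiEnv)
    (phi : Set Name) (h : Heap) : Prop where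
  mem_phi : Name.cn c₀ ∈ phi
  join_xi : (xi c₀).join = none
  mem_phi_of_gc : ∀ d, gc d ≠ none → Name.cn d ∈ phi
  xi_gc_mem : ∀ d e, gc d ≠ none → (xi d).join = some e → e ∈ oContNames c₀ t
  contNamesOf_gf : contNamesOf gf ⊆ oContNames c₀ t
  contNamesOf_gc : contNamesOf gc ⊆ oContNames c₀ t
  contNamesOf_hp : contNamesOf h ⊆ oContNames c₀ t

theorem update_apply_of_cn_notMem {xi : XiEnv} {phi : Set Name} {d : CName}
    (hd : Name.cn d ∉ phi) (v : Option (Option CName)) (e : CName) (he : Name.cn e ∈ phi) :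
    Function.update xi d v e = xi e :=
  Function.update_of_ne (by rintro rfl; exact hd he) _ _

section EnvInv

variable {c₀ : CName} {t : List Act} {gf : FEnv} {gc : KEnv} {xi xi' : XiEnv}
  {phi phi' : Set Name} {h : Heap}

theorem EnvInv.mono (E : EnvInv c₀ t gf gc xi phi h) (s : List Act) (hphi : phi ⊆ phi')
    (hxi : ∀ e, Name.cn e ∈ phi → xi' e = xi e) :
    EnvInv c₀ (t ++ s) gf gc xi' phi' h where
  mem_phi := hphi E.mem_phi
  join_xi := by rw [hxi _ E.mem_phi]; exact E.join_xi
  mem_phi_of_gc d hd := hphi (E.mem_phi_of_gc d hd)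
  xi_gc_mem d e hd he :=
    oContNames_mono s (E.xi_gc_mem d e hd (by rwa [← hxi d (E.mem_phi_of_gc d hd)]))
  contNamesOf_gf := E.contNamesOf_gf.trans (oContNames_mono s)
  contNamesOf_gc := E.contNamesOf_gc.trans (oContNames_mono s)
  contNamesOf_hp := E.contNamesOf_hp.trans (oContNames_mono s)

theorem EnvInv.update_fresh (E : EnvInv c₀ t gf gc xi phi h) {c cu : CName} {K : Tm}
    (hc : Name.cn c ∉ phi) (hcu : cu ∈ oContNames c₀ t) (hK : K.contNames ⊆ oContNames c₀ t)
    (s : List Act) (hphi : phi ⊆ phi') (hc' : Name.cn c ∈ phi') :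
    EnvInv c₀ (t ++ s) gf (Function.update gc c (some K))
      (Function.update xi c (some (some cu))) phi' h := by
  have E' := E.mono s hphi (update_apply_of_cn_notMem hc (some (some cu)))
  refine { E' with
    mem_phi_of_gc := fun d hd => ?_
    xi_gc_mem := fun d e hd he => ?_
    contNamesOf_gc := (contNamesOf_update_subset _ _ _).trans
      (Set.union_subset E'.contNamesOf_gc (hK.trans (oContNames_mono s))) }
  · rcases eq_or_ne d c with rfl | hdc
    · exact hc'
    · exact E'.mem_phi_of_gc d (by rwa [Function.update_of_ne hdc] at hd)
  · rcases eq_or_ne d c with rfl | hdc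
    · obtain rfl : cu = e := by simpa using he
      exact oContNames_mono s hcu
    · rw [Function.update_of_ne hdc] at hd
      exact E'.xi_gc_mem d e hd he

end EnvInv

def TopOInv (c₀ : CName) (t : List Act) : Cfg → Prop
  | .act ⟨M, c, gf, gc, xi, phi, h, _⟩ =>
      EnvInv c₀ t gf gc xi phi h ∧ XiRecordsTopO c₀ t xi phi ∧
        insert c M.contNames ⊆ oContNames c₀ t
  | .pas ⟨gf, gc, xi, phi, h, _, _, tc⟩ =>
      EnvInv c₀ t gf gc xi phi h ∧ XiRecordsTopO c₀ t xi phi ∧ ∀ r, TopO c₀ t r ↔ r = tc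

theorem cn_notMem_of_fresh {A : AVal} {d : CName} {phi : Set Name}
    (h : (A.names ∪ {Name.cn d}) ∩ phi = ∅) : Name.cn d ∉ phi :=
  fun hd => (Set.eq_empty_iff_forall_notMem.mp h) _ ⟨.inr rfl, hd⟩

section Step

variable {vis bra : Bool} {c₀ : CName} {t : List Act}

theorem TopOInv.step_act {A : ACfg} {C' : Cfg} {a : Option Act}
    (hS : Step vis bra (.act A) a C') (hI : TopOInv c₀ t (.act A)) :
    TopOInv c₀ (t ++ a.toList) C' := by
  cases hS with
  | tau hR =>
    obtain ⟨E, R, hcur⟩ := hI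
    obtain ⟨hN, hh'⟩ := Set.union_subset_iff.mp
      (hR.contNames_subset.trans (Set.union_subset hcur E.contNamesOf_hp))
    rw [Option.toList_none, List.append_nil]
    exact ⟨{ E with contNamesOf_hp := hh' }, R, hN⟩
  | @pa V cu A g' gf gc xi phi h F _ hD _ _ =>
    obtain ⟨E, R, hcur⟩ := hI
    have hg' : contNamesOf g' ⊆ oContNames c₀ t :=
      hD.contNamesOf_subset.trans ((Set.subset_insert _ _).trans hcur)
    refine ⟨{ E.mono _ Set.subset_union_left fun _ _ => rfl with contNamesOf_gf := ?_ },
      R.append Set.subset_union_left (fun _ _ => rfl) nofun,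
      fun r => R.topO_append_pa_iff E.join_xi (hcur (Set.mem_insert _ _))⟩
    exact (contNamesOf_joinF_subset _ _).trans
      ((Set.union_subset E.contNamesOf_gf hg').trans (oContNames_mono _))
  | @pq K V f A cu c g' gf gc xi phi h F hK _ hD _ _ hdisj _ =>
    obtain ⟨E, R, hcur⟩ := hI
    have hc := cn_notMem_of_fresh hdisj
    have hphi : phi ⊆ phi ∪ A.names ∪ {Name.cn c} :=
      Set.subset_union_left.trans Set.subset_union_left
    have hsub : K.contNames ∪ V.contNames ⊆ oContNames c₀ t :=
      (Set.union_subset (K.contNames_subset_fill _)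
        ((hK.contNames_subset_fill _).trans' (by simp [Tm.contNames]))).trans
        ((Set.subset_insert _ _).trans hcur)
    have E' := E.update_fresh hc (hcur (Set.mem_insert _ _))
      (Set.subset_union_left.trans hsub) [.pq f A c] hphi (Set.mem_union_right _ rfl)
    refine ⟨{ E' with contNamesOf_gf := ?_ },
      R.append hphi (update_apply_of_cn_notMem hc _) nofun,
      fun r => topO_append_pq_iff⟩
    exact (contNamesOf_joinF_subset _ _).trans (Set.union_subset E'.contNamesOf_gf
      ((hD.contNamesOf_subset.trans (Set.subset_union_right.trans hsub)).trans
        (oContNames_mono _)))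

theorem TopOInv.step_pas {P : PCfg} {C' : Cfg} {a : Option Act}
    (hS : Step vis bra (.pas P) a C') (hI : TopOInv c₀ t (.pas P)) :
    TopOInv c₀ (t ++ a.toList) C' := by
  cases hS with
  | @oa K d e A gf gc xi phi h F av tc _ _ _ hgc hxi _ _ =>
    obtain ⟨E, R, -⟩ := hI
    have he : e ∈ oContNames c₀ t := E.xi_gc_mem d e (by simp [hgc]) (by simp [hxi])
    have hK := (contNames_subset_contNamesOf hgc).trans E.contNamesOf_gc
    refine ⟨E.mono _ Set.subset_union_left fun _ _ => rfl,
      R.append Set.subset_union_left (fun _ _ => rfl) nofun,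
      (Set.insert_subset he ?_).trans (oContNames_mono _)⟩
    exact (K.contNames_fill_subset _).trans (Set.union_subset hK (by simp))
  | @oq V f A d gf gc xi phi h F av tc _ _ _ hdisj _ hgf _ =>
    obtain ⟨E, R, htop⟩ := hI
    have hd := cn_notMem_of_fresh hdisj
    have hphi : phi ⊆ phi ∪ A.names ∪ {Name.cn d} :=
      Set.subset_union_left.trans Set.subset_union_left
    have hxi := update_apply_of_cn_notMem (xi := xi) hd (some tc)
    have hV := (contNames_subset_contNamesOf hgf).trans E.contNamesOf_gf
    refine ⟨E.mono _ hphi hxi, R.append hphi hxi ?_,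
      Set.insert_subset (mem_oContNames_append_oq f A d) ?_⟩
    · rintro f A d' ⟨⟩
      simpa using htop
    · simpa [Tm.contNames] using hV.trans (oContNames_mono _)

theorem TopOInv.step {C C' : Cfg} {a : Option Act} (hS : Step vis bra C a C')
    (hI : TopOInv c₀ t C) : TopOInv c₀ (t ++ a.toList) C' := by
  cases C
  exacts [hI.step_act hS, hI.step_pas hS]

end Step

section Bracketing

variable {vis : Bool} {c₀ : CName} {t : List Act}

theorem TopOInv.step_bra_iff {C C' : Cfg} {a : Option Act} (hI : TopOInv c₀ t C) :
    Step vis true C a C' ↔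
      Step vis false C a C' ∧ ∀ d A, a = some (.oa d A) → TopO c₀ t (some d) := by
  constructor
  · intro hS
    cases hS with
    | tau hR => exact ⟨.tau hR, nofun⟩
    | pa hV hD hlin hdisj => exact ⟨.pa hV hD hlin hdisj, nofun⟩
    | pq hK hV hD hlin hty hdisj hni => exact ⟨.pq hK hV hD hlin hty hdisj hni, nofun⟩
    | oq hty hlin hcty hdisj hni hgf hvis => exact ⟨.oq hty hlin hcty hdisj hni hgf hvis, nofun⟩
    | oa hty hlin hdisj hgc hxi hvis hbra =>
      refine ⟨.oa hty hlin hdisj hgc hxi hvis nofun, ?_⟩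
      rintro d A ⟨⟩
      exact (hI.2.2 _).mpr (hbra rfl).symm
  · rintro ⟨hS, hbr⟩
    cases hS with
    | tau hR => exact .tau hR
    | pa hV hD hlin hdisj => exact .pa hV hD hlin hdisj
    | pq hK hV hD hlin hty hdisj hni => exact .pq hK hV hD hlin hty hdisj hni
    | oq hty hlin hcty hdisj hni hgf hvis => exact .oq hty hlin hcty hdisj hni hgf hvis
    | oa hty hlin hdisj hgc hxi hvis =>
      exact .oa hty hlin hdisj hgc hxi hvis fun _ => ((hI.2.2 _).mp (hbr _ _ rfl)).symm

def OBracketedAfter (c₀ : CName) (t s : List Act) : Prop :=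
  ∀ pre d A, pre ++ [Act.oa d A] <+: s → TopO c₀ (t ++ pre) (some d)

theorem oBracketedAfter_nil : OBracketedAfter c₀ t [] := by
  intro pre d A h
  simpa using h.length_le

theorem oBracketedAfter_cons {a : Act} {s : List Act} :
    OBracketedAfter c₀ t (a :: s) ↔
      (∀ d A, a = .oa d A → TopO c₀ t (some d)) ∧ OBracketedAfter c₀ (t ++ [a]) s := by
  constructor
  · intro h
    refine ⟨fun d A ha => by simpa using h [] d A (by simp [ha]), fun pre d A hp => ?_⟩
    simpa using h (a :: pre) d A (List.cons_prefix_cons.mpr ⟨rfl, hp⟩)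
  · rintro ⟨ha, hs⟩ (_ | ⟨b, pre⟩) d A hp
    · obtain ⟨rfl, -⟩ := List.cons_prefix_cons.mp hp
      simpa using ha d A rfl
    · obtain ⟨rfl, hp'⟩ := List.cons_prefix_cons.mp hp
      simpa using hs pre d A hp'

theorem TopOInv.steps_bra_iff {C C' : Cfg} {s : List Act} (hI : TopOInv c₀ t C) :
    Steps vis true C s C' ↔ Steps vis false C s C' ∧ OBracketedAfter c₀ t s := by
  constructor
  · intro hS
    induction hS generalizing t with
    | nil => exact ⟨.nil, oBracketedAfter_nil⟩
    | tau h₁ _ ih =>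
      obtain ⟨h₁', -⟩ := hI.step_bra_iff.mp h₁
      obtain ⟨h₂, hbr⟩ := ih (by simpa using hI.step h₁')
      exact ⟨.tau h₁' h₂, hbr⟩
    | cons h₁ _ ih =>
      obtain ⟨h₁', hbr₁⟩ := hI.step_bra_iff.mp h₁
      obtain ⟨h₂, hbr⟩ := ih (hI.step h₁')
      exact ⟨.cons h₁' h₂, oBracketedAfter_cons.mpr ⟨fun d A ha => hbr₁ d A (ha ▸ rfl), hbr⟩⟩
  · rintro ⟨hS, hbr⟩
    induction hS generalizing t with
    | nil => exact .nil
    | tau h₁ _ ih =>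
      exact .tau (hI.step_bra_iff.mpr ⟨h₁, nofun⟩) (ih (by simpa using hI.step h₁) hbr)
    | cons h₁ _ ih =>
      obtain ⟨hbr₁, hbr⟩ := oBracketedAfter_cons.mp hbr
      exact .cons (hI.step_bra_iff.mpr ⟨h₁, fun d A ha => hbr₁ d A (Option.some.inj ha)⟩)
        (ih (hI.step h₁) hbr)

theorem TopOInv.traces_bra_iff {C : Cfg} {s : List Act} (hI : TopOInv c₀ [] C) :
    s ∈ Traces vis true C ↔ s ∈ Traces vis false C ∧ OBracketed c₀ s := by
  simp only [Traces, Set.mem_ofPred_eq, hI.steps_bra_iff, exists_and_right]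
  rfl

end Bracketing

inductive XiJoinEquiv : Cfg → Cfg → Prop
  | act {M : Tm} {c : CName} {gf : FEnv} {gc : KEnv} {xi xi' : XiEnv} {phi : Set Name}
      {h : Heap} {F : Name → Option (Set Name)} : (∀ d, (xi d).join = (xi' d).join) →
      XiJoinEquiv (.act ⟨M, c, gf, gc, xi, phi, h, F⟩) (.act ⟨M, c, gf, gc, xi', phi, h, F⟩)
  | pas {gf : FEnv} {gc : KEnv} {xi xi' : XiEnv} {phi : Set Name} {h : Heap}
      {F : Name → Option (Set Name)} {av : Set Name} {tc : Option CName} :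
      (∀ d, (xi d).join = (xi' d).join) →
      XiJoinEquiv (.pas ⟨gf, gc, xi, phi, h, F, av, tc⟩) (.pas ⟨gf, gc, xi', phi, h, F, av, tc⟩)

theorem XiJoinEquiv.symm {C D : Cfg} (h : XiJoinEquiv C D) : XiJoinEquiv D C := by
  cases h with
  | act hx => exact .act fun d => (hx d).symm
  | pas hx => exact .pas fun d => (hx d).symm

theorem join_update_eq_join_update {xi xi' : XiEnv} (hx : ∀ d, (xi d).join = (xi' d).join)
    (c : CName) (v : Option (Option CName)) (d : CName) :
    (Function.update xi c v d).join = (Function.update xi' c v d).join := by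
  rcases eq_or_ne d c with rfl | hd
  · simp
  · simp [hd, hx d]

section Simulation

variable {vis bra : Bool}

theorem XiJoinEquiv.step {C C' D : Cfg} {a : Option Act} (hS : Step vis bra C a C')
    (hCD : XiJoinEquiv C D) : ∃ D', Step vis bra D a D' ∧ XiJoinEquiv C' D' := by
  cases hS with
  | tau hR => cases hCD with | act hx => exact ⟨_, .tau hR, .act hx⟩
  | @pa V c A g' gf gc xi phi h F hV hD hlin hdisj =>
    cases hCD with
    | act hx => exact ⟨_, .pa hV hD hlin hdisj, by rw [hx c]; exact .pas hx⟩
  | pq hK hV hD hlin hty hdisj hni =>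
    cases hCD with
    | act hx =>
      exact ⟨_, .pq hK hV hD hlin hty hdisj hni, .pas (join_update_eq_join_update hx _ _)⟩
  | oa hty hlin hdisj hgc hxi hvis hbra =>
    cases hCD with
    | pas hx =>
      refine ⟨_, .oa hty hlin hdisj hgc ?_ hvis hbra, .act hx⟩
      rw [← Option.join_eq_some_iff, ← hx, hxi]
      rfl
  | oq hty hlin hcty hdisj hni hgf hvis =>
    cases hCD with
    | pas hx =>
      exact ⟨_, .oq hty hlin hcty hdisj hni hgf hvis, .act (join_update_eq_join_update hx _ _)⟩

theorem XiJoinEquiv.steps {C C' D : Cfg} {s : List Act} (hS : Steps vis bra C s C')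
    (hCD : XiJoinEquiv C D) : ∃ D', Steps vis bra D s D' := by
  induction hS generalizing D with
  | nil => exact ⟨D, .nil⟩
  | tau h₁ _ ih =>
    obtain ⟨D₁, hD₁, hR⟩ := hCD.step h₁
    obtain ⟨D', hD'⟩ := ih hR
    exact ⟨D', .tau hD₁ hD'⟩
  | cons h₁ _ ih =>
    obtain ⟨D₁, hD₁, hR⟩ := hCD.step h₁
    obtain ⟨D', hD'⟩ := ih hR
    exact ⟨D', .cons hD₁ hD'⟩

theorem XiJoinEquiv.traces_eq {C D : Cfg} (hCD : XiJoinEquiv C D) :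
    Traces vis bra C = Traces vis bra D :=
  Set.ext fun _ => ⟨fun ⟨_, hS⟩ => hCD.steps hS, fun ⟨_, hS⟩ => hCD.symm.steps hS⟩

end Simulation

theorem xiJoinEquiv_cfgInitBra_cfgInit (M : Tm) (ρ : List AVal) (c : CName) :
    XiJoinEquiv (cfgInitBra M ρ c) (cfgInit M ρ c) := by
  refine .act fun d => ?_
  rcases eq_or_ne d c with rfl | hd
  · simp
  · simp [hd]

theorem topOInv_cfgInitBra {M : Tm} (hM : ∀ τ K d, Tm.contE τ K d ∉ M.subterms)
    (ρ : List AVal) (c : CName) : TopOInv c [] (cfgInitBra M ρ c) := by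
  have hM' : (initTm M ρ).contNames = ∅ :=
    Set.subset_eq_empty (contNames_initTm_subset M ρ) (Tm.contNames_eq_empty_of_contE_free hM)
  refine ⟨⟨.inr rfl, by simp, nofun, nofun, ?_, ?_, ?_⟩, fun s₁ f A d s₂ h => by simp at h, ?_⟩
  iterate 3 exact contNamesOf_none.subset.trans (Set.empty_subset _)
  rw [hM']
  exact Set.insert_subset (Set.mem_insert c _) (Set.empty_subset _)

theorem hos_traces_are_obracketed_hosc_traces_general
    (Γ : TyCtx) (τ : Ty) (M : Tm) (hM : CrFreeTm Γ M τ)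
    (ρ : List AVal) (c : CName) (t : List Act) :
    t ∈ Traces false true (cfgInitBra M ρ c) ↔
      (t ∈ Traces false false (cfgInit M ρ c) ∧ OBracketed c t) := by
  rw [(topOInv_cfgInitBra hM.synt.2.1 ρ c).traces_bra_iff,
    (xiJoinEquiv_cfgInitBra_cfgInit M ρ c).traces_eq]

/-- the HOS[HOSC] LTS generates exactly the O-bracketed traces of the
HOSC[HOSC] LTS: t ∈ Tr_HOS(C_{M,bra}^{ρ,c}) iff t ∈ Tr_HOSC(C_M^{ρ,c}) and t is
O-bracketed, for cr-free HOSC terms. -/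
theorem hos_traces_are_obracketed_hosc_traces
    (Γ : TyCtx) (τ : Ty) (M : Tm) (hM : CrFreeTm Γ M τ)
    (ρ : List AVal) (hρ : AssignTyped ρ Γ) (c : CName) (hc : c.ty = τ) (t : List Act) :
    t ∈ Traces false true (cfgInitBra M ρ c) ↔
      (t ∈ Traces false false (cfgInit M ρ c) ∧ OBracketed c t) :=
  hos_traces_are_obracketed_hosc_traces_general Γ τ M hM ρ c t

end OGS
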